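/- arXiv:0902.1954 — 2 statements merged into one kernel-verified Lean document; each statement's English description precedes it below -/
import Mathlib

section
/- For every n ≥ 0, the inclusion (∂Δ[n] × Δ[1]) ∪ (Δ[n] × {1}) → Δ[n] × Δ[1] is a finite composition of pushouts of horn inclusions of the form Λ^k[n+1] → Δ[n+1] with 0 < k ≤ n+1; in particular, it is a right anodyne extension, i.e. it belongs to the smallest class of morphisms of simplicial sets containing the horn inclusions Λ^k[m] → Δ[m] (m ≥ 1, 0 < k ≤ m) and closed under pushouts, transfinite compositions and retracts. -/
open CategoryTheory CategoryTheory.Limits Simplicial MonoidalCategory SSet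

universe u

/-- A morphism `f` is a retract of a morphism `g` in the arrow category. -/
def RetractArrow {A B X Y : SSet.{u}} (f : A ⟶ B) (g : X ⟶ Y) : Prop :=
  ∃ (s : Arrow.mk f ⟶ Arrow.mk g) (r : Arrow.mk g ⟶ Arrow.mk f), s ≫ r = 𝟙 _

/-- The inclusion functor of the subset `{i | i < j}` of a preorder `J` into `J`. -/
def iioFunctor {J : Type} [Preorder J] (j : J) : Set.Iio j ⥤ J where
  obj i := i.1
  map φ := homOfLE (leOfHom φ)

/-- The cocone on the restriction of a functor `F : J ⥤ SSet` to `{i | i < j}`,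
with apex `F.obj j`; asking it to be colimiting expresses that `F` is continuous
at the limit element `j`. -/
def coconeAt {J : Type} [Preorder J] (F : J ⥤ SSet.{u}) (j : J) :
    Cocone (iioFunctor j ⋙ F) where
  pt := F.obj j
  ι :=
    { app := fun i => F.map (homOfLE i.2.le)
      naturality := fun i i' φ => by
        dsimp [iioFunctor]
        rw [Category.comp_id, ← F.map_comp]
        rfl }

/-- A class of morphisms of simplicial sets is weakly saturated if it is closed under
pushouts, retracts and transfinite compositions. -/
structure IsWeaklySaturated (W : MorphismProperty SSet.{u}) : Prop where
  pushout : ∀ {A B X Y : SSet.{u}} {t : A ⟶ X} {f : A ⟶ B} {g : X ⟶ Y} {b : B ⟶ Y},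
      IsPushout t f g b → W f → W g
  retract : ∀ {A B X Y : SSet.{u}} {f : A ⟶ B} {g : X ⟶ Y},
      _root_.RetractArrow f g → W g → W f
  transfinite : ∀ (J : Type) [LinearOrder J] [OrderBot J] [SuccOrder J] [WellFoundedLT J]
      (F : J ⥤ SSet.{u}),
      (∀ j : J, ¬ IsMax j → W (F.map (homOfLE (Order.le_succ j)))) →
      (∀ j : J, Order.IsSuccLimit j → Nonempty (IsColimit (coconeAt F j))) →
      ∀ (c : Cocone F), IsColimit c → W (c.ι.app ⊥)

/-- The class of right horn inclusions `Λ[m, k] → Δ[m]`, `m ≥ 1`, `0 < k ≤ m`. -/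
def RightHornIncls : MorphismProperty SSet.{u} := fun _ _ f =>
  ∃ (m : ℕ) (k : Fin (m + 1)), 0 < (k : ℕ) ∧ (k : ℕ) ≤ m ∧ Arrow.mk f = Arrow.mk (SSet.horn m k).ι

/-- A right anodyne extension: a morphism belonging to the smallest class of morphisms of
simplicial sets containing the right horn inclusions and closed under pushouts,
transfinite compositions and retracts. -/
def RightAnodyne {A B : SSet.{u}} (f : A ⟶ B) : Prop :=
  ∀ W : MorphismProperty SSet.{u}, IsWeaklySaturated W →
    (∀ {X Y : SSet.{u}} (g : X ⟶ Y), RightHornIncls g → W g) → W f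

/-- `f` is a pushout of some morphism belonging to the class `S`. -/
def IsPushoutOfMem (S : MorphismProperty SSet.{u}) {A B : SSet.{u}} (f : A ⟶ B) : Prop :=
  ∃ (X Y : SSet.{u}) (g : X ⟶ Y) (t : X ⟶ A) (b : Y ⟶ B), S g ∧ IsPushout t g f b

/-- Finite (nonempty) compositions of pushouts of morphisms belonging to `S`. -/
inductive FiniteCompOfPushouts (S : MorphismProperty SSet.{u}) :
    ∀ {A B : SSet.{u}}, (A ⟶ B) → Prop
| of {A B : SSet.{u}} (f : A ⟶ B) : IsPushoutOfMem S f → FiniteCompOfPushouts S f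
| comp {A B C : SSet.{u}} (f : A ⟶ B) (g : B ⟶ C) :
      FiniteCompOfPushouts S f → IsPushoutOfMem S g → FiniteCompOfPushouts S (f ≫ g)

/-- The vertex `e` of `Δ[1]`, as a morphism `Δ[0] ⟶ Δ[1]`. -/
def vertexMap (e : Fin 2) : (Δ[0] : SSet.{u}) ⟶ Δ[1] :=
  SSet.stdSimplex.map (SimplexCategory.const _ _ e)

/-- The union `(∂Δ[n] × Δ[1]) ∪ (Δ[n] × {e})` inside `Δ[n] × Δ[1]`, i.e. the pushout
of `∂Δ[n] × Δ[1]` and `Δ[n] × {e}` over `∂Δ[n] × {e}`. -/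
noncomputable def boundaryCorner (n : ℕ) (e : Fin 2) : SSet.{u} :=
  pushout ((∂Δ[n] : SSet.{u}) ◁ vertexMap e) ((boundary n).ι ▷ Δ[0])

/-- The inclusion `(∂Δ[n] × Δ[1]) ∪ (Δ[n] × {e}) → Δ[n] × Δ[1]`. -/
noncomputable def boundaryCornerIncl (n : ℕ) (e : Fin 2) :
    boundaryCorner.{u} n e ⟶ Δ[n] ⊗ Δ[1] :=
  pushout.desc ((boundary n).ι ▷ Δ[1]) (Δ[n] ◁ vertexMap e)
    (whisker_exchange (boundary n).ι (vertexMap e))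

/-!
The nondegenerate `(n + 1)`-simplices of the prism `Δ[n] ⊗ Δ[1]` are the shuffles
`σ_k : Δ[n + 1] ⟶ Δ[n] ⊗ Δ[1]`, `k ≤ n`, with vertices `(0,0), …, (k,0), (k,1), …, (n,1)`;
every simplex of the prism lies in `Δ[n] ⊗ {1}` or in some `σ_k`. Attach `σ_0, …, σ_n` in this
order to `(∂Δ[n] ⊗ Δ[1]) ∪ (Δ[n] ⊗ {1})`. Each `σ_k` is injective, and a simplex of `σ_k` is
already present before the `k`-th step exactly when it misses a vertex other than `k + 1`:
missing `j ∉ {k, k + 1}` puts it in `∂Δ[n] ⊗ Δ[1]`, and missing `k` puts it in `σ_{k - 1}`, or in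
`Δ[n] ⊗ {1}` if `k = 0`. So the `k`-th step is a pushout of `Λ[n + 1, k + 1] ⟶ Δ[n + 1]`,
and `0 < k + 1`.
-/

lemma IsWeaklySaturated.comp_mem {W : MorphismProperty SSet.{u}} (hW : IsWeaklySaturated W)
    {A B C : SSet.{u}} {f : A ⟶ B} {g : B ⟶ C} (hf : W f) (hg : W g) : W (f ≫ g) := by
  refine hW.transfinite (Fin 3) (ComposableArrows.mk₂ f g) (fun j hj => ?_)
    (fun j hj => absurd hj Order.not_isSuccLimit_of_isSuccArchimedean)
    _ (colimitOfDiagramTerminal isTerminalTop _)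
  fin_cases j
  · exact hf
  · exact hg
  · exact absurd (fun _ _ => Fin.le_last _) hj

lemma IsPushoutOfMem.iso_hom_comp {S : MorphismProperty SSet.{u}} {A A' B : SSet.{u}}
    {f : A ⟶ B} (hf : IsPushoutOfMem S f) (e : A' ≅ A) : IsPushoutOfMem S (e.hom ≫ f) := by
  obtain ⟨X, Y, g, t, b, hg, h⟩ := hf
  exact ⟨X, Y, g, t ≫ e.inv, b, hg, h.of_iso (Iso.refl _) e.symm (Iso.refl _) (Iso.refl _)
    (by simp) (by simp) (by simp) (by simp)⟩

lemma IsPushoutOfMem.comp_iso_hom {S : MorphismProperty SSet.{u}} {A B B' : SSet.{u}}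
    {f : A ⟶ B} (hf : IsPushoutOfMem S f) (e : B ≅ B') : IsPushoutOfMem S (f ≫ e.hom) := by
  obtain ⟨X, Y, g, t, b, hg, h⟩ := hf
  exact ⟨X, Y, g, t, b ≫ e.hom, hg, h.of_iso (Iso.refl _) (Iso.refl _) (Iso.refl _) e
    (by simp) (by simp) (by simp) (by simp)⟩

namespace FiniteCompOfPushouts

variable {S : MorphismProperty SSet.{u}}

lemma iso_hom_comp {A A' B : SSet.{u}} {f : A ⟶ B} (hf : FiniteCompOfPushouts S f)
    (e : A' ≅ A) : FiniteCompOfPushouts S (e.hom ≫ f) := by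
  induction hf with
  | of f hf => exact .of _ (hf.iso_hom_comp e)
  | comp f g _ hg ih => simpa using FiniteCompOfPushouts.comp (e.hom ≫ f) g ih hg

lemma comp_iso_hom {A B B' : SSet.{u}} {f : A ⟶ B} (hf : FiniteCompOfPushouts S f)
    (e : B ≅ B') : FiniteCompOfPushouts S (f ≫ e.hom) := by
  cases hf with
  | of f hf => exact .of _ (hf.comp_iso_hom e)
  | comp f g hf hg => simpa using .comp _ _ hf (hg.comp_iso_hom e)

lemma rightAnodyne (hS : S ≤ RightHornIncls.{u})
    {A B : SSet.{u}} {f : A ⟶ B} (hf : FiniteCompOfPushouts S f) : RightAnodyne f := by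
  intro W hW hhorn
  have pushout_mem : ∀ {A B : SSet.{u}} {f : A ⟶ B}, IsPushoutOfMem S f → W f := by
    rintro _ _ _ ⟨_, _, g, _, _, hg, h⟩
    exact hW.pushout h (hhorn g (hS g hg))
  induction hf with
  | of f hf => exact pushout_mem hf
  | comp f g _ hg ih => exact hW.comp_mem ih (pushout_mem hg)

lemma homOfLE {X : SSet.{u}} {F : ℕ → X.Subcomplex} (hF : Monotone F) {N : ℕ}
    (h : ∀ k ≤ N, IsPushoutOfMem S (Subcomplex.homOfLE (hF k.le_succ))) :
    FiniteCompOfPushouts S (Subcomplex.homOfLE (hF (Nat.zero_le (N + 1)))) := by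
  induction N with
  | zero => exact .of _ (h 0 le_rfl)
  | succ N ih =>
    simpa using .comp _ _ (ih fun k hk => h k (hk.trans N.le_succ)) (h (N + 1) le_rfl)

end FiniteCompOfPushouts

def RightHornInclsOfDim (m : ℕ) : MorphismProperty SSet.{u} := fun _ _ f =>
  ∃ k : Fin (m + 1), 0 < (k : ℕ) ∧ (k : ℕ) ≤ m ∧ Arrow.mk f = Arrow.mk (SSet.horn m k).ι

lemma rightHornInclsOfDim_le (m : ℕ) : RightHornInclsOfDim.{u} m ≤ RightHornIncls :=
  fun _ _ _ ⟨k, hk, hkm, h⟩ => ⟨m, k, hk, hkm, h⟩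

namespace SSet.Subcomplex

lemma isPushout_of_le_sup_range {X Y : SSet.{u}} (f : Y ⟶ X) [Mono f] {A B : X.Subcomplex}
    (hA : A ≤ B) (hf : range f ≤ B) (hB : B ≤ A ⊔ range f) :
    IsPushout (A.fromPreimage f) (A.preimage f).ι (homOfLE hA) (lift f hf) := by
  refine IsPushout.of_forall_isPushout_app fun m => ?_
  have hinj : Function.Injective (f.app m) := (mono_iff_injective _).1 inferInstance
  refine Types.isPushout_of_isPullback_of_mono' ?_ ?_ ?_
  · rw [Types.isPullback_iff]
    refine ⟨by ext; rfl, fun y y' h => Subtype.ext h.2, fun a y h => ⟨⟨y, ?_⟩, ?_, rfl⟩⟩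
    · have h' : a.1 = f.app m y := congrArg Subtype.val h
      change f.app m y ∈ A.obj m
      exact h' ▸ a.2
    · exact Subtype.ext (congrArg Subtype.val h).symm
  · ext b
    simp only [Set.sup_eq_union, Set.mem_union, Set.mem_range, Set.mem_univ, iff_true]
    rcases hB _ b.2 with ha | ⟨y, hy⟩
    · exact Or.inl ⟨⟨b.1, ha⟩, rfl⟩
    · exact Or.inr ⟨y, Subtype.ext hy⟩
  · exact fun y y' _ _ h => hinj (congrArg Subtype.val h)

end SSet.Subcomplex

lemma SSet.stdSimplex.asOrderHom_injective {d : ℕ} {m : SimplexCategoryᵒᵖ} :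
    Function.Injective (stdSimplex.asOrderHom (n := d) (m := m)) :=
  fun _ _ h => stdSimplex.objEquiv.injective (SimplexCategory.Hom.ext _ _ h)

lemma Fin.val_predAbove {n : ℕ} (k : Fin (n + 1)) (j : Fin (n + 2)) :
    (k.predAbove j : ℕ) = if (k : ℕ) < j then (j : ℕ) - 1 else j := by
  split_ifs with h
  · rw [Fin.predAbove_of_castSucc_lt _ _ (by simpa [Fin.lt_def] using h), Fin.val_pred]
  · rw [Fin.predAbove_of_le_castSucc _ _ (by simpa [Fin.le_def] using h), Fin.coe_castPred]

instance (e : Fin 2) : Mono (vertexMap.{u} e) := stdSimplex.isTerminalObj₀.mono_from _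

lemma mem_range_vertexMap_iff (e : Fin 2) {m : SimplexCategoryᵒᵖ} (z : (Δ[1] : SSet.{u}).obj m) :
    z ∈ (Subcomplex.range (vertexMap e)).obj m ↔ ∀ a, stdSimplex.asOrderHom z a = e := by
  constructor
  · rintro ⟨_, rfl⟩ a
    rfl
  · intro h
    exact ⟨stdSimplex.objMk (OrderHom.const _ 0),
      stdSimplex.asOrderHom_injective (OrderHom.ext _ _ (funext fun a => (h a).symm))⟩

namespace SSet.prodStdSimplex

variable {n : ℕ}

def threshold (k : Fin (n + 1)) : Fin (n + 2) →o Fin 2 where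
  toFun j := if j ≤ k.castSucc then 0 else 1
  monotone' i j hij := by
    dsimp only
    split_ifs <;> omega

lemma val_threshold (k : Fin (n + 1)) (j : Fin (n + 2)) :
    (threshold k j : ℕ) = if (j : ℕ) ≤ k then 0 else 1 := by
  simp only [threshold, OrderHom.coe_mk, Fin.le_def, Fin.val_castSucc]
  split_ifs <;> rfl

def shuffleVertex (k : Fin (n + 1)) (j : Fin (n + 2)) : Fin (n + 1) × Fin 2 :=
  (k.predAbove j, threshold k j)

lemma shuffleVertex_le_shuffleVertex_iff (k : Fin (n + 1)) (i j : Fin (n + 2)) :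
    shuffleVertex k i ≤ shuffleVertex k j ↔ i ≤ j := by
  simp only [shuffleVertex, Prod.mk_le_mk, Fin.le_def, Fin.val_predAbove, val_threshold]
  split_ifs <;> omega

lemma shuffleVertex_injective (k : Fin (n + 1)) : Function.Injective (shuffleVertex k) :=
  fun i j h => le_antisymm ((shuffleVertex_le_shuffleVertex_iff k i j).1 h.le)
    ((shuffleVertex_le_shuffleVertex_iff k j i).1 h.ge)

lemma mem_range_shuffleVertex_iff (k : Fin (n + 1)) (p : Fin (n + 1) × Fin 2) :
    p ∈ Set.range (shuffleVertex k) ↔ (p.2 = 0 → p.1 ≤ k) ∧ (p.2 = 1 → k ≤ p.1) := by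
  constructor
  · rintro ⟨j, rfl⟩
    simp only [shuffleVertex, Fin.le_def, Fin.ext_iff, Fin.val_predAbove, val_threshold]
    split_ifs <;> omega
  · obtain ⟨c, e⟩ := p
    rintro ⟨h0, h1⟩
    fin_cases e
    · refine ⟨c.castSucc, Prod.ext (Fin.ext ?_) (Fin.ext ?_)⟩ <;>
        simp [shuffleVertex, Fin.val_predAbove, val_threshold, h0 rfl]
    · refine ⟨c.succ, Prod.ext (Fin.ext ?_) (Fin.ext ?_)⟩ <;>
        simp [shuffleVertex, Fin.val_predAbove, val_threshold, h1 rfl]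

def InShuffleFiltration {α : Type*} (k : ℕ) (p : α → Fin (n + 1) × Fin 2) : Prop :=
  (¬Function.Surjective (fun a => (p a).1) ∨ ∀ a, (p a).2 = 1) ∨
    ∃ i : Fin (n + 1), (i : ℕ) < k ∧ ∀ a, p a ∈ Set.range (shuffleVertex i)

lemma InShuffleFiltration.range_union_ne_univ {α : Type*} {k : Fin (n + 1)} {f : α → Fin (n + 2)}
    (h : InShuffleFiltration k (shuffleVertex k ∘ f)) : Set.range f ∪ {k.succ} ≠ Set.univ := by
  rw [Set.ne_univ_iff_exists_notMem]
  simp only [Set.mem_union, Set.mem_singleton_iff, Set.mem_range, not_or, not_exists]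
  rcases h with (hs | h1) | ⟨i, hik, hi⟩
  · obtain ⟨c, hc⟩ := not_forall.1 hs
    refine ⟨if c ≤ k then c.castSucc else c.succ, fun a ha => hc ⟨a, ?_⟩, ?_⟩
    · simp only [Function.comp_apply, shuffleVertex, ha]
      split_ifs <;> simp [Fin.ext_iff, Fin.val_predAbove] <;> omega
    · split_ifs <;> simp [Fin.ext_iff] <;> omega
  · refine ⟨k.castSucc, fun a ha => ?_, by simp [Fin.ext_iff]⟩
    simpa [shuffleVertex, ha, Fin.ext_iff, val_threshold] using h1 a
  · refine ⟨i.succ, fun a ha => ?_, by simp [Fin.ext_iff]; omega⟩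
    have := ((mem_range_shuffleVertex_iff _ _).1 (hi a)).1
    simp only [Function.comp_apply, shuffleVertex, ha, Fin.le_iff_val_le_val, Fin.ext_iff,
      val_threshold, Fin.val_predAbove, Fin.val_succ, Fin.val_zero] at this
    split_ifs at this <;> omega

lemma inShuffleFiltration_of_range_union_ne_univ {α : Type*} {k : Fin (n + 1)}
    {f : α → Fin (n + 2)} (h : Set.range f ∪ {k.succ} ≠ Set.univ) :
    InShuffleFiltration k (shuffleVertex k ∘ f) := by
  obtain ⟨j, hj⟩ := Set.ne_univ_iff_exists_notMem _ |>.1 h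
  simp only [Set.mem_union, Set.mem_range, Set.mem_singleton_iff, not_or, not_exists,
    Fin.ext_iff, Fin.val_succ] at hj
  obtain ⟨hf, hjk⟩ := hj
  simp only [InShuffleFiltration, Function.comp_apply, shuffleVertex, mem_range_shuffleVertex_iff]
  by_cases hjk' : (j : ℕ) = k
  · rcases Nat.eq_zero_or_pos (k : ℕ) with hk | hk
    · refine Or.inl (Or.inr fun a => ?_)
      have := hf a
      rw [Fin.ext_iff, val_threshold, if_neg (by omega)]
      rfl
    · refine Or.inr ⟨⟨(k : ℕ) - 1, by omega⟩, by dsimp only; omega,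
        fun a => ⟨fun h0 => ?_, fun h1 => ?_⟩⟩
      all_goals
        have := hf a
        rw [Fin.ext_iff, val_threshold] at *
        rw [Fin.le_iff_val_le_val, Fin.val_predAbove]
        split_ifs at * <;> simp at * <;> omega
  · refine Or.inl (Or.inl fun hs => ?_)
    obtain ⟨a, ha⟩ := hs (k.predAbove j)
    have := hf a
    rw [Fin.ext_iff, Fin.val_predAbove, Fin.val_predAbove] at ha
    split_ifs at ha <;> omega

lemma exists_range_shuffleVertex {α : Type*} [LinearOrder α] [Fintype α]
    (p : α →o Fin (n + 1)) (q : α →o Fin 2) :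
    (∀ a, q a = 1) ∨ ∃ i, ∀ a, (p a, q a) ∈ Set.range (shuffleVertex i) := by
  refine or_iff_not_imp_left.2 fun h => ?_
  obtain ⟨a₀, ha₀⟩ := not_forall.1 h
  obtain ⟨a₁, ha₁, hmax⟩ := Finset.exists_max_image (Finset.univ.filter (q · = 0)) id
    ⟨a₀, by simp; omega⟩
  simp only [Finset.mem_filter, Finset.mem_univ, true_and, id] at ha₁ hmax
  refine ⟨p a₁, fun a => (mem_range_shuffleVertex_iff _ _).2
    ⟨fun h0 => p.monotone (hmax a h0), fun h1 => p.monotone (le_of_not_gt fun hlt => ?_)⟩⟩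
  have := q.monotone hlt.le
  simp_all

noncomputable def shuffle (k : Fin (n + 1)) : (Δ[n + 1] : SSet.{u}) ⟶ Δ[n] ⊗ Δ[1] :=
  CartesianMonoidalCategory.lift (SSet.stdSimplex.map (SimplexCategory.σ k))
    (SSet.stdSimplex.map (SimplexCategory.mkHom (threshold k)))

lemma shuffle_app_apply (k : Fin (n + 1)) {m : SimplexCategoryᵒᵖ}
    (y : (Δ[n + 1] : SSet.{u}).obj m) (a : Fin (m.unop.len + 1)) :
    (stdSimplex.asOrderHom ((shuffle k).app m y).1 a,
      stdSimplex.asOrderHom ((shuffle k).app m y).2 a) =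
      shuffleVertex k (stdSimplex.asOrderHom y a) := rfl

instance (k : Fin (n + 1)) : Mono (shuffle.{u} k) := by
  have (m : SimplexCategoryᵒᵖ) : Mono ((shuffle.{u} k).app m) := by
    refine (mono_iff_injective _).2 fun y y' h => ?_
    refine stdSimplex.asOrderHom_injective (OrderHom.ext _ _ (funext fun a => ?_))
    apply shuffleVertex_injective k
    rw [← shuffle_app_apply, ← shuffle_app_apply, h]
  exact NatTrans.mono_of_mono_app _

lemma mem_range_shuffle_iff (k : Fin (n + 1)) {m : SimplexCategoryᵒᵖ}
    (x : (Δ[n] ⊗ Δ[1] : SSet.{u}).obj m) :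
    x ∈ (Subcomplex.range (shuffle k)).obj m ↔
      ∀ a, (stdSimplex.asOrderHom x.1 a, stdSimplex.asOrderHom x.2 a) ∈
        Set.range (shuffleVertex k) := by
  refine ⟨fun ⟨y, hy⟩ a => ⟨_, hy ▸ (shuffle_app_apply k y a).symm⟩, fun h => ?_⟩
  choose j hj using h
  have hj_mono : Monotone j := fun a b hab => by
    rw [← shuffleVertex_le_shuffleVertex_iff k, hj, hj]
    exact ⟨(stdSimplex.asOrderHom x.1).monotone hab, (stdSimplex.asOrderHom x.2).monotone hab⟩
  refine ⟨stdSimplex.objMk ⟨j, hj_mono⟩, Prod.ext ?_ ?_⟩ <;>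
    refine stdSimplex.asOrderHom_injective (OrderHom.ext _ _ (funext fun a => ?_))
  · exact congrArg Prod.fst (hj a)
  · exact congrArg Prod.snd (hj a)

noncomputable def shuffleFiltration (n k : ℕ) : (Δ[n] ⊗ Δ[1] : SSet.{u}).Subcomplex :=
  (∂Δ[n]).unionProd (Subcomplex.range (vertexMap 1)) ⊔
    ⨆ (i : Fin (n + 1)) (_ : (i : ℕ) < k), Subcomplex.range (shuffle i)

lemma mem_shuffleFiltration_iff (k : ℕ) {m : SimplexCategoryᵒᵖ}
    (x : (Δ[n] ⊗ Δ[1] : SSet.{u}).obj m) :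
    x ∈ (shuffleFiltration n k).obj m ↔
      InShuffleFiltration k
        fun a => (stdSimplex.asOrderHom x.1 a, stdSimplex.asOrderHom x.2 a) := by
  simp only [shuffleFiltration, Subfunctor.max_obj, Subfunctor.iSup_obj, Set.mem_union,
    Set.mem_iUnion, exists_prop, mem_range_shuffle_iff]
  refine or_congr_left ((Subcomplex.mem_unionProd_iff _ _ x).trans (or_comm.trans ?_))
  rw [mem_range_vertexMap_iff]
  rfl

lemma preimage_shuffleFiltration (k : Fin (n + 1)) :
    (shuffleFiltration.{u} n k).preimage (shuffle k) = Λ[n + 1, k.succ] := by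
  ext m y
  rw [Subcomplex.preimage_obj, Set.mem_preimage, mem_shuffleFiltration_iff, mem_horn_iff]
  exact ⟨InShuffleFiltration.range_union_ne_univ, inShuffleFiltration_of_range_union_ne_univ⟩

lemma shuffleFiltration_monotone (n : ℕ) : Monotone (shuffleFiltration.{u} n) := by
  intro k k' h
  unfold shuffleFiltration
  exact sup_le_sup_left (iSup₂_le fun i hi => le_iSup₂_of_le (f := fun (i : Fin (n + 1)) _ =>
    Subcomplex.range (shuffle.{u} i)) i (hi.trans_le h) le_rfl) _

lemma shuffleFiltration_zero (n : ℕ) :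
    shuffleFiltration.{u} n 0 = (∂Δ[n]).unionProd (Subcomplex.range (vertexMap 1)) := by
  simp [shuffleFiltration]

lemma range_shuffle_le_shuffleFiltration (k : Fin (n + 1)) :
    Subcomplex.range (shuffle.{u} k) ≤ shuffleFiltration n (k + 1) :=
  le_sup_of_le_right (le_iSup₂_of_le k (Nat.lt_succ_self _) le_rfl)

lemma shuffleFiltration_succ_le (k : Fin (n + 1)) :
    shuffleFiltration.{u} n (k + 1) ≤ shuffleFiltration n k ⊔ Subcomplex.range (shuffle k) := by
  refine sup_le (le_sup_of_le_left le_sup_left) (iSup₂_le fun i hi => ?_)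
  rcases Nat.lt_succ_iff_lt_or_eq.1 hi with hi | hi
  · exact le_sup_of_le_left (le_sup_of_le_right (le_iSup₂_of_le i hi le_rfl))
  · rw [Fin.ext hi]
    exact le_sup_right

lemma shuffleFiltration_eq_top (n : ℕ) : shuffleFiltration.{u} n (n + 1) = ⊤ := by
  ext m x
  simp only [Subfunctor.top_obj, Set.top_eq_univ, Set.mem_univ, iff_true,
    mem_shuffleFiltration_iff, InShuffleFiltration]
  rcases exists_range_shuffleVertex (stdSimplex.asOrderHom x.1) (stdSimplex.asOrderHom x.2)
    with h | ⟨i, hi⟩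
  · exact Or.inl (Or.inr h)
  · exact Or.inr ⟨i, i.is_lt, hi⟩

lemma isPushoutOfMem_shuffleFiltration (k : Fin (n + 1)) :
    IsPushoutOfMem (RightHornInclsOfDim.{u} (n + 1))
      (Subcomplex.homOfLE (shuffleFiltration_monotone.{u} n (Nat.le_succ k))) :=
  ⟨_, _, _, _, _, ⟨k.succ, k.succ_pos, k.succ.is_le, by rw [preimage_shuffleFiltration]⟩,
    Subcomplex.isPushout_of_le_sup_range (shuffle k) _ (range_shuffle_le_shuffleFiltration k)
      (shuffleFiltration_succ_le k)⟩

end SSet.prodStdSimplex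

lemma isPushout_unionProd_range_vertexMap (n : ℕ) (e : Fin 2) :
    IsPushout ((∂Δ[n] : SSet.{u}) ◁ vertexMap e) ((boundary n).ι ▷ Δ[0])
      (Subcomplex.unionProd.ι₂ _ _)
      (Δ[n] ◁ Subcomplex.toRange (vertexMap e) ≫ Subcomplex.unionProd.ι₁ _ _) := by
  let r := asIso (Subcomplex.toRange (vertexMap.{u} e))
  refine (Subcomplex.unionProd.isPushout (∂Δ[n]) _).flip.of_iso
    (whiskerLeftIso _ r.symm) (Iso.refl _) (whiskerLeftIso _ r.symm) (Iso.refl _) ?_ ?_ ?_ ?_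
  · simp only [Iso.refl_hom, Category.comp_id, whiskerLeftIso_hom, Iso.symm_hom, r, asIso_inv,
      ← whiskerLeft_comp]
    rw [(IsIso.inv_comp_eq _).2 (Subcomplex.toRange_ι _).symm]
  · exact (whisker_exchange _ _).symm
  · simp
  · simp [r]

lemma boundaryCornerIncl_eq (n : ℕ) (e : Fin 2) :
    boundaryCornerIncl.{u} n e = (isPushout_unionProd_range_vertexMap.{u} n e).isoPushout.inv ≫
      ((∂Δ[n]).unionProd (Subcomplex.range (vertexMap e))).ι := by
  apply pushout.hom_ext
  · rw [IsPushout.inl_isoPushout_inv_assoc, Subcomplex.unionProd.ι₂_ι]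
    exact pushout.inl_desc _ _ _
  · rw [IsPushout.inr_isoPushout_inv_assoc, Category.assoc, Subcomplex.unionProd.ι₁_ι,
      ← whiskerLeft_comp, Subcomplex.toRange_ι]
    exact pushout.inr_desc _ _ _

/-- For every `n ≥ 0`, the inclusion `(∂Δ[n] × Δ[1]) ∪ (Δ[n] × {1}) → Δ[n] × Δ[1]` is a
finite composition of pushouts of horn inclusions `Λ[n+1, k] → Δ[n+1]` with
`0 < k ≤ n + 1`; in particular, it is a right anodyne extension. -/
theorem boundaryCornerIncl_one_finiteCompOfPushouts_and_rightAnodyne (n : ℕ) :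
    FiniteCompOfPushouts
      (fun _ _ f => ∃ k : Fin (n + 2), 0 < (k : ℕ) ∧ (k : ℕ) ≤ n + 1 ∧
        Arrow.mk f = Arrow.mk (SSet.horn (n + 1) k).ι)
      (boundaryCornerIncl.{u} n 1) ∧
    RightAnodyne (boundaryCornerIncl.{u} n 1) := by
  have hsteps := FiniteCompOfPushouts.homOfLE (prodStdSimplex.shuffleFiltration_monotone.{u} n)
    (N := n) fun k hk => prodStdSimplex.isPushoutOfMem_shuffleFiltration ⟨k, Nat.lt_succ_of_le hk⟩
  have : IsIso (prodStdSimplex.shuffleFiltration.{u} n (n + 1)).ι :=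
    (Subfunctor.eq_top_iff_isIso _).1 (prodStdSimplex.shuffleFiltration_eq_top n)
  have hzero := hsteps.comp_iso_hom (asIso (prodStdSimplex.shuffleFiltration.{u} n (n + 1)).ι)
  rw [asIso_hom, Subcomplex.homOfLE_ι, prodStdSimplex.shuffleFiltration_zero] at hzero
  have hincl : FiniteCompOfPushouts (RightHornInclsOfDim (n + 1)) (boundaryCornerIncl.{u} n 1) := by
    rw [boundaryCornerIncl_eq.{u}]
    exact hzero.iso_hom_comp (isPushout_unionProd_range_vertexMap.{u} n 1).isoPushout.symm
  exact ⟨hincl, hincl.rightAnodyne (rightHornInclsOfDim_le _)⟩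
end

section
/- For all n ≥ 1 and 0 < k ≤ n, the horn inclusion Λ^k[n] → Δ[n] is a retract, in the arrow category of simplicial sets, of the inclusion (Λ^k[n] × Δ[1]) ∪ (Δ[n] × {1}) → Δ[n] × Δ[1]. -/
/-!
The retraction `Δ[n] ⊗ Δ[1] ⟶ Δ[n]` is induced by the monotone map `(j, 0) ↦ j`,
`(j, 1) ↦ max j i`. It is the identity on `Δ[n] ⊗ {0}`, so `ι₀` is a section of it. It maps
`Λ[n, i] ⊗ Δ[1]` into the horn, because a simplex missing a vertex `j ≠ i` still misses `j`
after replacing vertices by their maximum with `i`; and it maps `Δ[n] ⊗ {1}` into the horn,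
because all vertices of the image are `≥ i > 0`, so the face opposite to `0 ≠ i` contains it.
-/

open CategoryTheory CategoryTheory.Limits Simplicial MonoidalCategory SSet

universe u

/-- The union `(Λ[n, i] × Δ[1]) ∪ (Δ[n] × {e})` inside `Δ[n] × Δ[1]`, i.e. the pushout
of `Λ[n, i] × Δ[1]` and `Δ[n] × {e}` over `Λ[n, i] × {e}`. -/
noncomputable def hornCorner (n : ℕ) (i : Fin (n + 1)) (e : Fin 2) : SSet.{u} :=
  pushout ((Λ[n, i] : SSet.{u}) ◁ vertexMap e) ((horn n i).ι ▷ Δ[0])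

/-- The inclusion `(Λ[n, i] × Δ[1]) ∪ (Δ[n] × {e}) → Δ[n] × Δ[1]`. -/
noncomputable def hornCornerIncl (n : ℕ) (i : Fin (n + 1)) (e : Fin 2) :
    hornCorner.{u} n i e ⟶ Δ[n] ⊗ Δ[1] :=
  pushout.desc ((horn n i).ι ▷ Δ[1]) (Δ[n] ◁ vertexMap e)
    (whisker_exchange ((horn n i).ι) (vertexMap e))

open SSet.stdSimplex (asOrderHom)

def SSet.prodStdSimplex.homOfOrderHom {p q r : ℕ}
    (f : Fin (p + 1) × Fin (q + 1) →o Fin (r + 1)) : (Δ[p] ⊗ Δ[q] : SSet.{u}) ⟶ Δ[r] where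
  app _ := ↾fun σ => stdSimplex.objMk (f.comp ((asOrderHom σ.1).prod (asOrderHom σ.2)))
  naturality _ _ _ := rfl

lemma SSet.mem_horn_iff_exists_ne_notMem_range {n : ℕ} (i : Fin (n + 1))
    {m : SimplexCategoryᵒᵖ} (x : Δ[n].obj m) :
    x ∈ (horn n i).obj m ↔ ∃ j ≠ i, j ∉ Set.range (asOrderHom x) := by
  simp only [mem_horn_iff, Set.ne_univ_iff_exists_notMem, Set.mem_union,
    Set.mem_singleton_iff, not_or]
  exact ⟨fun ⟨j, hj, hji⟩ => ⟨j, hji, hj⟩, fun ⟨j, hji, hj⟩ => ⟨j, hj, hji⟩⟩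

lemma CategoryTheory.Arrow.eq_id_of_mono_of_right_eq_id {C : Type*} [Category C] {X Y : C}
    {f : X ⟶ Y} [Mono f] (φ : Arrow.mk f ⟶ Arrow.mk f) (h : φ.right = 𝟙 Y) : φ = 𝟙 _ := by
  ext : 1
  · rw [← cancel_mono f]
    exact φ.w.trans (by simp [h])
  · exact h

section

variable {n : ℕ} (i : Fin (n + 1))

def hornRetraction : Fin (n + 1) × Fin 2 →o Fin (n + 1) where
  toFun x := if x.2 = 0 then x.1 else max x.1 i
  monotone' := by
    rintro ⟨a, e⟩ ⟨b, f⟩ ⟨hab, hef⟩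
    dsimp only
    split_ifs with he hf hf
    · exact hab
    · exact le_max_of_le_left hab
    · exact absurd (le_antisymm (hf ▸ hef) (Fin.zero_le _)) he
    · exact max_le_max_right i hab

@[simp]
lemma hornRetraction_zero (j : Fin (n + 1)) : hornRetraction i (j, 0) = j := rfl

lemma le_hornRetraction_one (j : Fin (n + 1)) : i ≤ hornRetraction i (j, 1) :=
  le_max_right j i

lemma eq_of_hornRetraction_eq {j k : Fin (n + 1)} {e : Fin 2} (hk : k ≠ i)
    (h : hornRetraction i (j, e) = k) : j = k := by
  change (if e = 0 then j else max j i) = k at h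
  split_ifs at h
  · exact h
  · rcases max_choice j i with hj | hi
    · rwa [hj] at h
    · exact absurd (hi ▸ h).symm hk

open SSet.prodStdSimplex

lemma range_horn_ι_whiskerRight_comp_hornRetraction_le :
    Subcomplex.range ((horn n i).ι ▷ Δ[1] ≫ homOfOrderHom.{u} (hornRetraction i)) ≤
      horn n i := by
  rintro m _ ⟨⟨σ, τ⟩, rfl⟩
  obtain ⟨j, hji, hj⟩ := (mem_horn_iff_exists_ne_notMem_range i σ.1).1 σ.2
  refine (mem_horn_iff_exists_ne_notMem_range i _).2 ⟨j, hji, ?_⟩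
  rintro ⟨t, ht⟩
  exact hj ⟨t, eq_of_hornRetraction_eq i hji ht⟩

lemma range_whiskerLeft_vertexMap_one_comp_hornRetraction_le (hi : i ≠ 0) :
    Subcomplex.range ((Δ[n] ◁ vertexMap 1) ≫ homOfOrderHom.{u} (hornRetraction i)) ≤
      horn n i := by
  rintro m _ ⟨⟨σ, c⟩, rfl⟩
  refine (mem_horn_iff_exists_ne_notMem_range i _).2 ⟨0, hi.symm, ?_⟩
  rintro ⟨t, ht⟩
  exact hi (Fin.le_zero_iff.1 (ht ▸ le_hornRetraction_one i _))

noncomputable def hornCornerRetraction (hi : i ≠ 0) : hornCorner.{u} n i 1 ⟶ Λ[n, i] :=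
  pushout.desc (Subcomplex.lift _ (range_horn_ι_whiskerRight_comp_hornRetraction_le i))
    (Subcomplex.lift _ (range_whiskerLeft_vertexMap_one_comp_hornRetraction_le i hi)) (by
      rw [← cancel_mono (horn n i).ι]
      simp [whisker_exchange_assoc])

lemma hornCornerRetraction_comp_ι (hi : i ≠ 0) :
    hornCornerRetraction i hi ≫ (horn n i).ι =
      hornCornerIncl n i 1 ≫ homOfOrderHom (hornRetraction i) := by
  apply pushout.hom_ext
  · erw [pushout.inl_desc_assoc, pushout.inl_desc_assoc, Subcomplex.lift_ι]
  · erw [pushout.inr_desc_assoc, pushout.inr_desc_assoc, Subcomplex.lift_ι]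

lemma ι₀_comp_hornRetraction : ι₀ ≫ homOfOrderHom.{u} (hornRetraction i) = 𝟙 Δ[n] := by
  ext m σ
  apply stdSimplex.objEquiv.injective
  ext t : 3
  exact hornRetraction_zero i _

noncomputable def hornRetractHornCornerIncl (hi : i ≠ 0) :
    CategoryTheory.RetractArrow (horn n i).ι (hornCornerIncl.{u} n i 1) where
  i := Arrow.homMk (ι₀ ≫ pushout.inl _ _) ι₀ (by
    erw [Category.assoc, pushout.inl_desc]
    exact ι₀_comp _)
  r := Arrow.homMk (hornCornerRetraction i hi) (homOfOrderHom (hornRetraction i))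
    (hornCornerRetraction_comp_ι i hi)
  retract := Arrow.eq_id_of_mono_of_right_eq_id _ (ι₀_comp_hornRetraction i)

end

/-- For all `n ≥ 1` and `0 < i ≤ n`, the horn inclusion `Λ[n, i] → Δ[n]` is a retract,
in the arrow category of simplicial sets, of the inclusion
`(Λ[n, i] × Δ[1]) ∪ (Δ[n] × {1}) → Δ[n] × Δ[1]`. -/
theorem hornInclusion_retract_of_hornCornerIncl_one
    (n : ℕ) (i : Fin (n + 1)) (hi : 0 < (i : ℕ)) :
    _root_.RetractArrow ((horn n i).ι) (hornCornerIncl.{u} n i 1) :=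
  have h := hornRetractHornCornerIncl i (Fin.pos_iff_ne_zero.1 hi)
  ⟨h.i, h.r, h.retract⟩
end
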